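/- Assume that no nonzero X ∈ 𝔫 satisfies [k, X] = 0 for all k ∈ 𝔨. Let P_𝔫 be a Q-symmetric positive-definite endomorphism of 𝔫 commuting with ad(k)|_𝔫 for every k ∈ 𝔨. Then the extended Ricci endomorphism of the generalized submersion metric P = 0 ⊕ P_𝔫 satisfies Ric(P).T = 0 for every T ∈ 𝔱 and Ric(P).X = Ric_N(P_𝔫).X for every X ∈ 𝔫; that is, Ric(0 ⊕ P_𝔫) = 0 ⊕ Ric_N(P_𝔫). -/

import Mathlib

open scoped RealInnerProductSpace

noncomputable section

variable {G : Type*} [NormedAddCommGroup G] [InnerProductSpace ℝ G] [FiniteDimensional ℝ G]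

/-- Orthogonal projection onto the subspace `W`, as a plain map `G → G`. -/
def pr (W : Submodule ℝ G) : G → G := fun v => (W.orthogonalProjection v : G)

/-- Orthogonal projection onto the subspace `W`, as a continuous linear endomorphism of `G`. -/
def projL (W : Submodule ℝ G) : G →L[ℝ] G := W.subtypeL.comp W.orthogonalProjection

variable (br : G →ₗ[ℝ] G →ₗ[ℝ] G)

/-- `br` is a Lie bracket making `G` a real Lie algebra, and the inner product `Q` of `G`
is ad-invariant: `Q([Z,X],Y) + Q(X,[Z,Y]) = 0`. -/
structure IsLieQ : Prop where
  alt : ∀ x : G, br x x = 0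
  jacobi : ∀ x y z : G, br x (br y z) + br y (br z x) + br z (br x y) = 0
  adInv : ∀ Z X Y : G, ⟪br Z X, Y⟫ + ⟪X, br Z Y⟫ = 0

/-- `𝔥 ⊆ 𝔨` are Lie subalgebras of `𝔤` with `[𝔨,𝔨] ⊆ 𝔥`. -/
structure IsToralPair (𝔥 𝔨 : Submodule ℝ G) : Prop where
  subalg_h : ∀ x ∈ 𝔥, ∀ y ∈ 𝔥, br x y ∈ 𝔥
  subalg_k : ∀ x ∈ 𝔨, ∀ y ∈ 𝔨, br x y ∈ 𝔨
  h_le_k : 𝔥 ≤ 𝔨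
  bk_in_h : ∀ x ∈ 𝔨, ∀ y ∈ 𝔨, br x y ∈ 𝔥

/-- no nonzero element of `𝔫 = 𝔨ᗮ` commutes with all of `𝔨`. -/
def NoTrivial (𝔨 : Submodule ℝ G) : Prop :=
  ∀ X ∈ 𝔨ᗮ, (∀ k ∈ 𝔨, br k X = 0) → X = 0

/-- `A` maps `W` into itself and is `Q`-symmetric on `W`. -/
def SymOn (W : Submodule ℝ G) (A : G →L[ℝ] G) : Prop :=
  (∀ v ∈ W, A v ∈ W) ∧ ∀ v ∈ W, ∀ w ∈ W, ⟪A v, w⟫ = ⟪v, A w⟫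

/-- `A` is positive definite on the subspace `W`. -/
def PosDefOn (W : Submodule ℝ G) (A : G →L[ℝ] G) : Prop :=
  ∀ v ∈ W, v ≠ 0 → 0 < ⟪A v, v⟫

/-- `A` commutes with `ad(k)|_𝔫` on `𝔫 = 𝔨ᗮ`, for every `k ∈ 𝔨`. -/
def CommAd (𝔨 : Submodule ℝ G) (A : G →L[ℝ] G) : Prop :=
  ∀ k ∈ 𝔨, ∀ X ∈ 𝔨ᗮ, A (br k X) = br k (A X)

/-- `Ainv` maps `W` to itself and is a two-sided inverse of `A` on the subspace `W`. -/
def InvOn' (W : Submodule ℝ G) (A Ainv : G →L[ℝ] G) : Prop :=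
  (∀ v ∈ W, Ainv v ∈ W) ∧ (∀ v ∈ W, Ainv (A v) = v) ∧ (∀ v ∈ W, A (Ainv v) = v)

/-- The explicit formula for the extended operator `S(P)(V).W` of the generalized submersion
metric `P = P_𝔱 ⊕ P_𝔫`, where `𝔱 = 𝔨 ⊓ 𝔥ᗮ`, `𝔪 = 𝔥ᗮ`, `𝔫 = 𝔨ᗮ`:
`S(P)(T).T' = 0`, `S(P)(T).Y = -[T,Y] + (1/2) P_𝔫⁻¹.[P_𝔱.T, Y]`,
`S(P)(X).T' = -(1/2) P_𝔫⁻¹.[X, P_𝔱.T']`,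
`S(P)(X).Y = -(1/2)[X,Y]_𝔪 - (1/2) P_𝔫⁻¹.(([X,P_𝔫.Y])_𝔫 - ([P_𝔫.X,Y])_𝔫)`. -/
def Sfun (𝔥 𝔨 : Submodule ℝ G) (pt pn pninv : G →L[ℝ] G) (V W : G) : G :=
  -(br (pr (𝔨 ⊓ 𝔥ᗮ) V) (pr 𝔨ᗮ W)) + (2⁻¹ : ℝ) • pninv (br (pt (pr (𝔨 ⊓ 𝔥ᗮ) V)) (pr 𝔨ᗮ W))
    - (2⁻¹ : ℝ) • pninv (br (pr 𝔨ᗮ V) (pt (pr (𝔨 ⊓ 𝔥ᗮ) W)))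
    - (2⁻¹ : ℝ) • pr 𝔥ᗮ (br (pr 𝔨ᗮ V) (pr 𝔨ᗮ W))
    - (2⁻¹ : ℝ) • pninv (pr 𝔨ᗮ (br (pr 𝔨ᗮ V) (pn (pr 𝔨ᗮ W)))
        - pr 𝔨ᗮ (br (pn (pr 𝔨ᗮ V)) (pr 𝔨ᗮ W)))

/-- The extended curvature `Rm(P)(V₁,V₂).W` of the generalized submersion metric
`P = P_𝔱 ⊕ P_𝔫`: `Rm(P)(V₁,V₂) = ad([V₁,V₂]_𝔥)|_𝔪 - [S(P)(V₁),S(P)(V₂)] - S(P)([V₁,V₂]_𝔪)`. -/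
def Rmfun (𝔥 𝔨 : Submodule ℝ G) (pt pn pninv : G →L[ℝ] G) (V₁ V₂ W : G) : G :=
  br (pr 𝔥 (br V₁ V₂)) W
    - (Sfun br 𝔥 𝔨 pt pn pninv V₁ (Sfun br 𝔥 𝔨 pt pn pninv V₂ W)
        - Sfun br 𝔥 𝔨 pt pn pninv V₂ (Sfun br 𝔥 𝔨 pt pn pninv V₁ W))
    - Sfun br 𝔥 𝔨 pt pn pninv (pr 𝔥ᗮ (br V₁ V₂)) W

/-- `Tr (𝔪 ∋ Z ↦ Rm(P)(V₁, Z).V₂)`, computed via an orthonormal basis of `𝔪 = 𝔥ᗮ`. -/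
def RicBilin (𝔥 𝔨 : Submodule ℝ G) (pt pn pninv : G →L[ℝ] G) (V₁ V₂ : G) : ℝ :=
  ∑ i, ⟪((stdOrthonormalBasis ℝ 𝔥ᗮ) i : G),
        Rmfun br 𝔥 𝔨 pt pn pninv V₁ ((stdOrthonormalBasis ℝ 𝔥ᗮ) i : G) V₂⟫

/-- `Ric` is the extended Ricci endomorphism of the generalized submersion metric
`P = P_𝔱 ⊕ P_𝔫`: it maps `𝔪 = 𝔥ᗮ` to `𝔪`, vanishes on `𝔪ᗮ`, and satisfies
`Q(Ric.V₁, V₂) = Tr(𝔪 ∋ Z ↦ Rm(P)(V₁,Z).V₂)` for all `V₁, V₂ ∈ 𝔪`. -/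
def IsExtRic (𝔥 𝔨 : Submodule ℝ G) (pt pn pninv Ric : G →L[ℝ] G) : Prop :=
  Ric = (projL 𝔥ᗮ).comp (Ric.comp (projL 𝔥ᗮ)) ∧
  ∀ V₁ ∈ 𝔥ᗮ, ∀ V₂ ∈ 𝔥ᗮ, ⟪Ric V₁, V₂⟫ = RicBilin br 𝔥 𝔨 pt pn pninv V₁ V₂

/-- `SN` is the operator `S_N(P_𝔫)` of the base space `N`, relative to the reductive
decomposition `𝔤 = 𝔨 ⊕ 𝔫`, defined by the implicit equation
`-2 Q(S_N(X).Y, Z) = Q([X,Y]_𝔫, Z) + Q([P_𝔫⁻¹.Z, X]_𝔫, P_𝔫.Y) + Q([P_𝔫⁻¹.Z, Y]_𝔫, P_𝔫.X)`. -/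
def IsSN (𝔨 : Submodule ℝ G) (pn pninv : G →L[ℝ] G) (SN : G → G → G) : Prop :=
  (∀ X ∈ 𝔨ᗮ, ∀ Y ∈ 𝔨ᗮ, SN X Y ∈ 𝔨ᗮ) ∧
  ∀ X ∈ 𝔨ᗮ, ∀ Y ∈ 𝔨ᗮ, ∀ Z ∈ 𝔨ᗮ,
    (-2 : ℝ) * ⟪SN X Y, Z⟫ =
      ⟪pr 𝔨ᗮ (br X Y), Z⟫ + ⟪pr 𝔨ᗮ (br (pninv Z) X), pn Y⟫ + ⟪pr 𝔨ᗮ (br (pninv Z) Y), pn X⟫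

/-- The curvature `Rm_N(P_𝔫)(X,Y).W` of the base space `N`:
`Rm_N(X,Y) = ad([X,Y]_𝔨)|_𝔫 - [S_N(X),S_N(Y)] - S_N([X,Y]_𝔫)`. -/
def RmNfun (𝔨 : Submodule ℝ G) (SN : G → G → G) (X Y W : G) : G :=
  br (pr 𝔨 (br X Y)) W - (SN X (SN Y W) - SN Y (SN X W)) - SN (pr 𝔨ᗮ (br X Y)) W

/-- `RicN` is the Ricci endomorphism `Ric_N(P_𝔫)` of the base space `N`, relative to the
operator `SN = S_N(P_𝔫)`: it maps `𝔫 = 𝔨ᗮ` to `𝔫`, vanishes on `𝔫ᗮ`, and satisfies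
`Q(RicN.X, Y) = Tr(𝔫 ∋ Z ↦ Rm_N(X,Z).Y)` for all `X, Y ∈ 𝔫`. -/
def IsBaseRic (𝔨 : Submodule ℝ G) (SN : G → G → G) (RicN : G →L[ℝ] G) : Prop :=
  RicN = (projL 𝔨ᗮ).comp (RicN.comp (projL 𝔨ᗮ)) ∧
  ∀ X ∈ 𝔨ᗮ, ∀ Y ∈ 𝔨ᗮ,
    ⟪RicN X, Y⟫ = ∑ i, ⟪((stdOrthonormalBasis ℝ 𝔨ᗮ) i : G),
      RmNfun br 𝔨 SN X ((stdOrthonormalBasis ℝ 𝔨ᗮ) i : G) Y⟫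

/-! With `P_𝔱 = 0` the operator `S` only sees `𝔫`-components: `S(V)` vanishes on `𝔨`,
`S(T) = -ad T` on `𝔫`, and `S(X).Y = -½[X,Y]_𝔱 + S_N(X).Y` for `X, Y ∈ 𝔫`. Hence `Rm(V,Z)` kills
`𝔱`, `Rm(T,U) = 0` on `𝔫` by the Jacobi identity, and on `𝔫` both `Rm(T,X)` and
`Rm(X,Y) - Rm_N(X,Y)` are `𝔱`-valued, because `S_N` is `ad(𝔨)`-equivariant (`P_𝔫` commutes with
`ad 𝔨`). Splitting the Ricci trace over `𝔪 = 𝔱 ⊕ 𝔫`, these `𝔱`-valued terms drop out of the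
`𝔫`-part, while the `𝔱`-part `Q(U, Rm(X,U).Y) = -Q(U, Rm(U,X).Y)` vanishes by ad-invariance of
`Q`. -/

set_option linter.unusedSectionVars false

lemma pr_eq_starProjection (W : Submodule ℝ G) : pr W = W.starProjection := rfl

namespace Submodule

theorem starProjection_inf_orthogonal {K L : Submodule ℝ G} (h : K ≤ L) (v : G) :
    (Kᗮ ⊓ L).starProjection v = L.starProjection v - K.starProjection v := by
  refine eq_starProjection_of_mem_orthogonal ⟨?_, ?_⟩ ?_
  · have hK : K.starProjection (L.starProjection v) = K.starProjection v :=
      congr($(starProjection_comp_starProjection_of_le h) v)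
    simpa [hK] using sub_starProjection_mem_orthogonal (K := K) (L.starProjection v)
  · exact L.sub_mem (L.starProjection_apply_mem v) (h (K.starProjection_apply_mem v))
  · rw [sub_sub_eq_add_sub, add_sub_right_comm]
    exact add_mem (orthogonal_le inf_le_right (sub_starProjection_mem_orthogonal v))
      (orthogonal_le inf_le_left (le_orthogonal_orthogonal K (K.starProjection_apply_mem v)))

theorem starProjection_eq_add_inf_orthogonal {K L : Submodule ℝ G} (h : K ≤ L) :
    L.starProjection = K.starProjection + (Kᗮ ⊓ L).starProjection := by
  ext v
  simp [starProjection_inf_orthogonal h]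

theorem inner_starProjection_of_mem_left {K : Submodule ℝ G} {u : G} (hu : u ∈ K) (v : G) :
    ⟪u, K.starProjection v⟫ = ⟪u, v⟫ := by
  rw [← inner_starProjection_left_eq_right, starProjection_eq_self_iff.mpr hu]

theorem sum_inner_orthonormalBasis_eq_trace {ι : Type*} [Fintype ι] {K : Submodule ℝ G}
    (b : OrthonormalBasis ι ℝ K) (A : G →ₗ[ℝ] G) :
    ∑ i, ⟪(b i : G), A (b i)⟫ = LinearMap.trace ℝ G (K.starProjection.toLinearMap ∘ₗ A) := by
  rw [starProjection, ContinuousLinearMap.toLinearMap_comp, LinearMap.comp_assoc,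
    LinearMap.trace_comp_comm', LinearMap.trace_eq_sum_inner _ b]
  simp

theorem sum_inner_orthonormalBasis_of_starProjection_eq_add
    {ι κ μ : Type*} [Fintype ι] [Fintype κ] [Fintype μ] {K L M : Submodule ℝ G}
    (h : M.starProjection = K.starProjection + L.starProjection)
    (bM : OrthonormalBasis ι ℝ M) (bK : OrthonormalBasis κ ℝ K) (bL : OrthonormalBasis μ ℝ L)
    (A : G →ₗ[ℝ] G) :
    ∑ i, ⟪(bM i : G), A (bM i)⟫ = ∑ j, ⟪(bK j : G), A (bK j)⟫ + ∑ k, ⟪(bL k : G), A (bL k)⟫ := by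
  simp only [sum_inner_orthonormalBasis_eq_trace, h, ContinuousLinearMap.toLinearMap_add,
    LinearMap.add_comp, map_add]

end Submodule

namespace IsLieQ

variable {br}

theorem bracket_swap (hLie : IsLieQ br) (x y : G) : br x y = -br y x := by
  have h := hLie.alt (x + y)
  simp only [map_add, LinearMap.add_apply, hLie.alt, zero_add, add_zero] at h
  exact eq_neg_of_add_eq_zero_right h

theorem inner_bracket_left (hLie : IsLieQ br) (z x y : G) : ⟪br z x, y⟫ = -⟪x, br z y⟫ :=
  eq_neg_of_add_eq_zero_left (hLie.adInv z x y)

theorem bracket_bracket (hLie : IsLieQ br) (x y z : G) :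
    br x (br y z) = br (br x y) z + br y (br x z) := by
  have h := hLie.jacobi x y z
  rw [hLie.bracket_swap z x, map_neg, hLie.bracket_swap z (br x y)] at h
  linear_combination (norm := module) h

theorem inner_bracket_add_bracket_eq_zero (hLie : IsLieQ br) (u x y : G) :
    ⟪u, br x (br u y) + br (br u x) y⟫ = 0 := by
  have h1 := hLie.inner_bracket_left x u (br u y)
  have h2 := hLie.inner_bracket_left (br u x) u y
  have h3 := hLie.inner_bracket_left u (br u x) y
  rw [hLie.bracket_swap (br u x) u, inner_neg_left] at h2
  rw [hLie.bracket_swap x u, inner_neg_left] at h1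
  rw [inner_add_right]
  linarith

theorem bracket_mem_orthogonal (hLie : IsLieQ br) {K : Submodule ℝ G} {k : G}
    (hK : ∀ u ∈ K, br k u ∈ K) {x : G} (hx : x ∈ Kᗮ) : br k x ∈ Kᗮ := by
  intro u hu
  rw [real_inner_comm, hLie.inner_bracket_left, real_inner_comm, hx _ (hK u hu), neg_zero]

theorem starProjection_bracket (hLie : IsLieQ br) {K : Submodule ℝ G} {k : G}
    (hK : ∀ u ∈ K, br k u ∈ K) (v : G) :
    K.starProjection (br k v) = br k (K.starProjection v) := by
  refine Submodule.eq_starProjection_of_mem_orthogonal (hK _ (K.starProjection_apply_mem v)) ?_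
  rw [← map_sub]
  exact hLie.bracket_mem_orthogonal hK (Submodule.sub_starProjection_mem_orthogonal v)

end IsLieQ

namespace IsToralPair

variable {br} {𝔥 𝔨 : Submodule ℝ G}

theorem orthogonal_le_orthogonal (hpair : IsToralPair br 𝔥 𝔨) : 𝔨ᗮ ≤ 𝔥ᗮ :=
  Submodule.orthogonal_le hpair.h_le_k

theorem bracket_mem_orthogonal (hLie : IsLieQ br) (hpair : IsToralPair br 𝔥 𝔨) {k X : G}
    (hk : k ∈ 𝔨) (hX : X ∈ 𝔨ᗮ) : br k X ∈ 𝔨ᗮ :=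
  hLie.bracket_mem_orthogonal (hpair.subalg_k k hk) hX

theorem starProjection_orthogonal_bracket (hLie : IsLieQ br) (hpair : IsToralPair br 𝔥 𝔨)
    {k : G} (hk : k ∈ 𝔨) (v : G) :
    𝔨ᗮ.starProjection (br k v) = br k (𝔨ᗮ.starProjection v) :=
  hLie.starProjection_bracket (fun _ hu => hpair.bracket_mem_orthogonal hLie hk hu) v

theorem bracket_eq_zero (hLie : IsLieQ br) (hpair : IsToralPair br 𝔥 𝔨) {h T : G}
    (hh : h ∈ 𝔥) (hT : T ∈ 𝔨 ⊓ 𝔥ᗮ) : br h T = 0 := by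
  have hmem : br h T ∈ 𝔥 ⊓ 𝔥ᗮ :=
    ⟨hpair.bk_in_h h (hpair.h_le_k hh) T hT.1,
      hLie.bracket_mem_orthogonal (hpair.subalg_h h hh) hT.2⟩
  rwa [Submodule.inf_orthogonal_eq_bot, Submodule.mem_bot] at hmem

theorem starProjection_orthogonal_h (hpair : IsToralPair br 𝔥 𝔨) :
    𝔥ᗮ.starProjection = (𝔨 ⊓ 𝔥ᗮ).starProjection + 𝔨ᗮ.starProjection := by
  rw [Submodule.starProjection_eq_add_inf_orthogonal hpair.orthogonal_le_orthogonal,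
    Submodule.orthogonal_orthogonal, add_comm]

theorem starProjection_k (hpair : IsToralPair br 𝔥 𝔨) :
    𝔨.starProjection = 𝔥.starProjection + (𝔨 ⊓ 𝔥ᗮ).starProjection := by
  rw [Submodule.starProjection_eq_add_inf_orthogonal hpair.h_le_k]
  simp only [inf_comm]

end IsToralPair

section BaseOperator

variable {br} {𝔨 : Submodule ℝ G} {pn pninv : G →L[ℝ] G}

theorem InvOn'.inner_symm {W : Submodule ℝ G} (hpn : SymOn W pn) (hinv : InvOn' W pn pninv)
    {x y : G} (hx : x ∈ W) (hy : y ∈ W) : ⟪pninv x, y⟫ = ⟪x, pninv y⟫ := by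
  conv_lhs => rw [← hinv.2.2 y hy]
  rw [← hpn.2 _ (hinv.1 x hx) _ (hinv.1 y hy), hinv.2.2 x hx]

theorem InvOn'.bracket_comm {𝔥 : Submodule ℝ G} (hLie : IsLieQ br)
    (hpair : IsToralPair br 𝔥 𝔨) (hcomm : CommAd br 𝔨 pn) (hinv : InvOn' 𝔨ᗮ pn pninv)
    {k X : G} (hk : k ∈ 𝔨) (hX : X ∈ 𝔨ᗮ) :
    pninv (br k X) = br k (pninv X) := by
  conv_lhs => rw [← hinv.2.2 X hX, ← hcomm k hk _ (hinv.1 X hX)]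
  exact hinv.2.1 _ (hpair.bracket_mem_orthogonal hLie hk (hinv.1 X hX))

variable (br 𝔨 pn pninv) in
/-- The explicit solution of the equation defining `S_N(P_𝔫)` in `IsSN`. -/
def baseS : G →ₗ[ℝ] G →ₗ[ℝ] G :=
  -(2⁻¹ : ℝ) • (br.compr₂ (𝔨ᗮ.starProjection : G →ₗ[ℝ] G) +
    (br.compl₂ (pn : G →ₗ[ℝ] G) - br ∘ₗ (pn : G →ₗ[ℝ] G)).compr₂
      ((pninv : G →ₗ[ℝ] G) ∘ₗ (𝔨ᗮ.starProjection : G →ₗ[ℝ] G)))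

theorem baseS_apply (X Y : G) :
    baseS br 𝔨 pn pninv X Y = -(2⁻¹ : ℝ) • (𝔨ᗮ.starProjection (br X Y) +
      pninv (𝔨ᗮ.starProjection (br X (pn Y) - br (pn X) Y))) := by
  simp [baseS]

theorem baseS_mem (hinv : InvOn' 𝔨ᗮ pn pninv) (X Y : G) :
    baseS br 𝔨 pn pninv X Y ∈ 𝔨ᗮ := by
  rw [baseS_apply]
  exact Submodule.smul_mem _ _ (add_mem (Submodule.starProjection_apply_mem _ _)
    (hinv.1 _ (Submodule.starProjection_apply_mem _ _)))

theorem inner_baseS (hLie : IsLieQ br) (hpn : SymOn 𝔨ᗮ pn) (hinv : InvOn' 𝔨ᗮ pn pninv)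
    {X Y Z : G} (hX : X ∈ 𝔨ᗮ) (hY : Y ∈ 𝔨ᗮ) (hZ : Z ∈ 𝔨ᗮ) :
    (-2 : ℝ) * ⟪baseS br 𝔨 pn pninv X Y, Z⟫ = ⟪pr 𝔨ᗮ (br X Y), Z⟫ +
      ⟪pr 𝔨ᗮ (br (pninv Z) X), pn Y⟫ + ⟪pr 𝔨ᗮ (br (pninv Z) Y), pn X⟫ := by
  have hZ' := hinv.1 Z hZ
  have hsymm : ⟪pninv (𝔨ᗮ.starProjection (br X (pn Y) - br (pn X) Y)), Z⟫ =
      ⟪br X (pn Y), pninv Z⟫ - ⟪br (pn X) Y, pninv Z⟫ := by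
    rw [hinv.inner_symm hpn (Submodule.starProjection_apply_mem _ _) hZ,
      Submodule.inner_starProjection_left_eq_right,
      Submodule.starProjection_eq_self_iff.mpr hZ', inner_sub_left]
  have h1 := hLie.inner_bracket_left X (pn Y) (pninv Z)
  have h2 := hLie.inner_bracket_left (pn X) Y (pninv Z)
  have h3 := hLie.inner_bracket_left (pninv Z) Y (pn X)
  rw [hLie.bracket_swap X (pninv Z), inner_neg_right, real_inner_comm (br (pninv Z) X)] at h1
  rw [hLie.bracket_swap (pn X) (pninv Z), inner_neg_right] at h2
  simp only [pr_eq_starProjection, Submodule.inner_starProjection_left_eq_right,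
    Submodule.starProjection_eq_self_iff.mpr hZ,
    Submodule.starProjection_eq_self_iff.mpr (hpn.1 X hX),
    Submodule.starProjection_eq_self_iff.mpr (hpn.1 Y hY), baseS_apply, inner_smul_left,
    inner_add_left, hsymm, RCLike.conj_to_real]
  linarith

theorem IsSN.eq_baseS (hLie : IsLieQ br) (hpn : SymOn 𝔨ᗮ pn) (hinv : InvOn' 𝔨ᗮ pn pninv)
    {SN : G → G → G} (hSN : IsSN br 𝔨 pn pninv SN) {X Y : G} (hX : X ∈ 𝔨ᗮ) (hY : Y ∈ 𝔨ᗮ) :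
    SN X Y = baseS br 𝔨 pn pninv X Y := by
  have hmem : SN X Y - baseS br 𝔨 pn pninv X Y ∈ 𝔨ᗮ :=
    sub_mem (hSN.1 X hX Y hY) (baseS_mem hinv X Y)
  have horth :
      ⟪SN X Y - baseS br 𝔨 pn pninv X Y, SN X Y - baseS br 𝔨 pn pninv X Y⟫ = 0 := by
    have h1 := hSN.2 X hX Y hY _ hmem
    have h2 := inner_baseS hLie hpn hinv hX hY hmem
    rw [inner_sub_left]
    linarith
  exact sub_eq_zero.mp (inner_self_eq_zero.mp horth)

theorem bracket_baseS {𝔥 : Submodule ℝ G} (hLie : IsLieQ br) (hpair : IsToralPair br 𝔥 𝔨)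
    (hcomm : CommAd br 𝔨 pn) (hinv : InvOn' 𝔨ᗮ pn pninv) {k X Y : G}
    (hk : k ∈ 𝔨) (hX : X ∈ 𝔨ᗮ) (hY : Y ∈ 𝔨ᗮ) :
    br k (baseS br 𝔨 pn pninv X Y) =
      baseS br 𝔨 pn pninv (br k X) Y + baseS br 𝔨 pn pninv X (br k Y) := by
  rw [baseS_apply, map_smul, map_add,
    ← hinv.bracket_comm hLie hpair hcomm hk (Submodule.starProjection_apply_mem _ _),
    ← hpair.starProjection_orthogonal_bracket hLie hk,
    ← hpair.starProjection_orthogonal_bracket hLie hk,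
    map_sub, hLie.bracket_bracket k X Y, hLie.bracket_bracket k X (pn Y),
    hLie.bracket_bracket k (pn X) Y,
    ← hcomm k hk X hX, ← hcomm k hk Y hY, baseS_apply, baseS_apply]
  simp only [map_add, map_sub]
  module

end BaseOperator

section CollapsedOperator

variable {br} {𝔥 𝔨 : Submodule ℝ G} {pn pninv : G →L[ℝ] G}

variable (br 𝔥 𝔨 pn pninv) in
/-- The extended operator `S(0 ⊕ P_𝔫)`, as a bilinear map. -/
def collapsedS : G →ₗ[ℝ] G →ₗ[ℝ] G :=
  -br.compl₁₂ ((𝔨 ⊓ 𝔥ᗮ).starProjection : G →ₗ[ℝ] G) (𝔨ᗮ.starProjection : G →ₗ[ℝ] G) -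
    (2⁻¹ : ℝ) • (br.compl₁₂ (𝔨ᗮ.starProjection : G →ₗ[ℝ] G)
      (𝔨ᗮ.starProjection : G →ₗ[ℝ] G)).compr₂ ((𝔨 ⊓ 𝔥ᗮ).starProjection : G →ₗ[ℝ] G) +
    (baseS br 𝔨 pn pninv).compl₁₂ (𝔨ᗮ.starProjection : G →ₗ[ℝ] G)
      (𝔨ᗮ.starProjection : G →ₗ[ℝ] G)

theorem collapsedS_apply (V W : G) :
    collapsedS br 𝔥 𝔨 pn pninv V W =
      -br ((𝔨 ⊓ 𝔥ᗮ).starProjection V) (𝔨ᗮ.starProjection W) -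
        (2⁻¹ : ℝ) • (𝔨 ⊓ 𝔥ᗮ).starProjection (br (𝔨ᗮ.starProjection V) (𝔨ᗮ.starProjection W)) +
        baseS br 𝔨 pn pninv (𝔨ᗮ.starProjection V) (𝔨ᗮ.starProjection W) := by
  simp [collapsedS]

theorem Sfun_zero_eq_collapsedS (hpair : IsToralPair br 𝔥 𝔨) (V W : G) :
    Sfun br 𝔥 𝔨 0 pn pninv V W = collapsedS br 𝔥 𝔨 pn pninv V W := by
  simp only [Sfun, collapsedS_apply, baseS_apply, pr_eq_starProjection,
    hpair.starProjection_orthogonal_h, add_apply, zero_apply, map_zero, LinearMap.zero_apply,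
    map_sub]
  module

theorem collapsedS_apply_of_mem_k {W : G} (hW : W ∈ 𝔨) (V : G) :
    collapsedS br 𝔥 𝔨 pn pninv V W = 0 := by
  simp [collapsedS_apply, Submodule.starProjection_orthogonal_apply_eq_zero hW]

theorem collapsedS_apply_t {T Y : G} (hT : T ∈ 𝔨 ⊓ 𝔥ᗮ) (hY : Y ∈ 𝔨ᗮ) :
    collapsedS br 𝔥 𝔨 pn pninv T Y = -br T Y := by
  simp [collapsedS_apply, Submodule.starProjection_orthogonal_apply_eq_zero hT.1,
    Submodule.starProjection_eq_self_iff.mpr hT, Submodule.starProjection_eq_self_iff.mpr hY]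

theorem collapsedS_apply_n {X Y : G} (hX : X ∈ 𝔨ᗮ) (hY : Y ∈ 𝔨ᗮ) :
    collapsedS br 𝔥 𝔨 pn pninv X Y =
      -(2⁻¹ : ℝ) • (𝔨 ⊓ 𝔥ᗮ).starProjection (br X Y) + baseS br 𝔨 pn pninv X Y := by
  have hXt : (𝔨 ⊓ 𝔥ᗮ).starProjection X = 0 :=
    (Submodule.starProjection_apply_eq_zero_iff _).mpr (Submodule.orthogonal_le inf_le_left hX)
  simp [collapsedS_apply, hXt, Submodule.starProjection_eq_self_iff.mpr hX,
    Submodule.starProjection_eq_self_iff.mpr hY, neg_smul, sub_eq_neg_add]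

end CollapsedOperator

section Curvature

variable {br} {𝔥 𝔨 : Submodule ℝ G} {pn pninv : G →L[ℝ] G}

theorem Rmfun_zero_eq_starProjection (hLie : IsLieQ br) (hpair : IsToralPair br 𝔥 𝔨)
    {W : G} (hW : W ∈ 𝔥ᗮ) (V Z : G) :
    Rmfun br 𝔥 𝔨 0 pn pninv V Z W = Rmfun br 𝔥 𝔨 0 pn pninv V Z (𝔨ᗮ.starProjection W) := by
  have hsplit : W = (𝔨 ⊓ 𝔥ᗮ).starProjection W + 𝔨ᗮ.starProjection W := by
    rw [← add_apply, ← hpair.starProjection_orthogonal_h,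
      Submodule.starProjection_eq_self_iff.mpr hW]
  have ht := (𝔨 ⊓ 𝔥ᗮ).starProjection_apply_mem W
  simp only [Rmfun, Sfun_zero_eq_collapsedS hpair, pr_eq_starProjection]
  conv_lhs => rw [hsplit]
  simp only [map_add, collapsedS_apply_of_mem_k ht.1,
    hpair.bracket_eq_zero hLie (𝔥.starProjection_apply_mem _) ht, zero_add]

theorem Rmfun_zero_t_t_n_eq_zero (hLie : IsLieQ br) (hpair : IsToralPair br 𝔥 𝔨) {T U Y : G}
    (hT : T ∈ 𝔨 ⊓ 𝔥ᗮ) (hU : U ∈ 𝔨 ⊓ 𝔥ᗮ) (hY : Y ∈ 𝔨ᗮ) :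
    Rmfun br 𝔥 𝔨 0 pn pninv T U Y = 0 := by
  have hTU : br T U ∈ 𝔥 := hpair.bk_in_h T hT.1 U hU.1
  simp only [Rmfun, Sfun_zero_eq_collapsedS hpair, pr_eq_starProjection,
    Submodule.starProjection_eq_self_iff.mpr hTU,
    Submodule.starProjection_orthogonal_apply_eq_zero hTU, map_zero, LinearMap.zero_apply,
    collapsedS_apply_t hT hY, collapsedS_apply_t hU hY, map_neg,
    collapsedS_apply_t hT (hpair.bracket_mem_orthogonal hLie hU.1 hY),
    collapsedS_apply_t hU (hpair.bracket_mem_orthogonal hLie hT.1 hY),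
    hLie.bracket_bracket T U Y]
  abel

theorem Rmfun_zero_t_n_n (hLie : IsLieQ br) (hpair : IsToralPair br 𝔥 𝔨)
    (hcomm : CommAd br 𝔨 pn) (hinv : InvOn' 𝔨ᗮ pn pninv) {T W Y : G}
    (hT : T ∈ 𝔨 ⊓ 𝔥ᗮ) (hW : W ∈ 𝔨ᗮ) (hY : Y ∈ 𝔨ᗮ) :
    Rmfun br 𝔥 𝔨 0 pn pninv T W Y =
      (2⁻¹ : ℝ) • (𝔨 ⊓ 𝔥ᗮ).starProjection (br W (br T Y) + br (br T W) Y) := by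
  have hTW := hpair.bracket_mem_orthogonal hLie hT.1 hW
  have hTY := hpair.bracket_mem_orthogonal hLie hT.1 hY
  simp only [Rmfun, Sfun_zero_eq_collapsedS hpair, pr_eq_starProjection,
    (Submodule.starProjection_apply_eq_zero_iff _).mpr (hpair.orthogonal_le_orthogonal hTW),
    Submodule.starProjection_eq_self_iff.mpr (hpair.orthogonal_le_orthogonal hTW),
    map_zero, LinearMap.zero_apply, collapsedS_apply_n hW hY, collapsedS_apply_t hT hY,
    collapsedS_apply_n hTW hY, map_add, map_smul, map_neg,
    collapsedS_apply_of_mem_k ((𝔨 ⊓ 𝔥ᗮ).starProjection_apply_mem _).1,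
    collapsedS_apply_t hT (baseS_mem hinv W Y), collapsedS_apply_n hW hTY,
    bracket_baseS hLie hpair hcomm hinv hT.1 hW hY]
  module

theorem Rmfun_zero_swap (hLie : IsLieQ br) (hpair : IsToralPair br 𝔥 𝔨) (V₁ V₂ W : G) :
    Rmfun br 𝔥 𝔨 0 pn pninv V₁ V₂ W = -Rmfun br 𝔥 𝔨 0 pn pninv V₂ V₁ W := by
  simp only [Rmfun, Sfun_zero_eq_collapsedS hpair, pr_eq_starProjection,
    hLie.bracket_swap V₁ V₂, map_neg, LinearMap.neg_apply]
  abel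

theorem inner_Rmfun_zero_n_t_n (hLie : IsLieQ br) (hpair : IsToralPair br 𝔥 𝔨)
    (hcomm : CommAd br 𝔨 pn) (hinv : InvOn' 𝔨ᗮ pn pninv) {X U Y : G}
    (hX : X ∈ 𝔨ᗮ) (hU : U ∈ 𝔨 ⊓ 𝔥ᗮ) (hY : Y ∈ 𝔨ᗮ) :
    ⟪U, Rmfun br 𝔥 𝔨 0 pn pninv X U Y⟫ = 0 := by
  rw [Rmfun_zero_swap hLie hpair, Rmfun_zero_t_n_n hLie hpair hcomm hinv hU hX hY,
    inner_neg_right, inner_smul_right, Submodule.inner_starProjection_of_mem_left hU,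
    hLie.inner_bracket_add_bracket_eq_zero, mul_zero, neg_zero]

theorem Rmfun_zero_sub_RmNfun_mem (hLie : IsLieQ br) (hpair : IsToralPair br 𝔥 𝔨)
    (hpn : SymOn 𝔨ᗮ pn) (hinv : InvOn' 𝔨ᗮ pn pninv)
    {SN : G → G → G} (hSN : IsSN br 𝔨 pn pninv SN) {X W Y : G}
    (hX : X ∈ 𝔨ᗮ) (hW : W ∈ 𝔨ᗮ) (hY : Y ∈ 𝔨ᗮ) :
    Rmfun br 𝔥 𝔨 0 pn pninv X W Y - RmNfun br 𝔨 SN X W Y ∈ 𝔨 ⊓ 𝔥ᗮ := by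
  have hXW := 𝔨ᗮ.starProjection_apply_mem (br X W)
  have hdiff : Rmfun br 𝔥 𝔨 0 pn pninv X W Y - RmNfun br 𝔨 SN X W Y =
      (2⁻¹ : ℝ) • (𝔨 ⊓ 𝔥ᗮ).starProjection (br X (baseS br 𝔨 pn pninv W Y) -
        br W (baseS br 𝔨 pn pninv X Y) + br (𝔨ᗮ.starProjection (br X W)) Y) := by
    simp only [Rmfun, RmNfun, Sfun_zero_eq_collapsedS hpair, pr_eq_starProjection,
      hpair.starProjection_orthogonal_h, hpair.starProjection_k, add_apply,
      map_add, map_sub, LinearMap.add_apply,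
      hSN.eq_baseS hLie hpn hinv hW hY, hSN.eq_baseS hLie hpn hinv hX hY,
      hSN.eq_baseS hLie hpn hinv hX (baseS_mem hinv W Y),
      hSN.eq_baseS hLie hpn hinv hW (baseS_mem hinv X Y),
      hSN.eq_baseS hLie hpn hinv hXW hY,
      collapsedS_apply_n hW hY, collapsedS_apply_n hX hY, collapsedS_apply_n hXW hY,
      collapsedS_apply_t ((𝔨 ⊓ 𝔥ᗮ).starProjection_apply_mem (br X W)) hY,
      map_smul, collapsedS_apply_of_mem_k ((𝔨 ⊓ 𝔥ᗮ).starProjection_apply_mem _).1,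
      collapsedS_apply_n hX (baseS_mem hinv W Y), collapsedS_apply_n hW (baseS_mem hinv X Y)]
    module
  rw [hdiff]
  exact Submodule.smul_mem _ _ (Submodule.starProjection_apply_mem _ _)

end Curvature

theorem mem_of_eq_projL_comp {W : Submodule ℝ G} {A : G →L[ℝ] G}
    (h : A = (projL W).comp (A.comp (projL W))) (v : G) : A v ∈ W := by
  rw [h]
  exact W.starProjection_apply_mem _

section Ricci

variable {br} {𝔥 𝔨 : Submodule ℝ G} {pn pninv : G →L[ℝ] G}

theorem RicBilin_zero_eq_starProjection (hLie : IsLieQ br) (hpair : IsToralPair br 𝔥 𝔨)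
    {V₂ : G} (hV₂ : V₂ ∈ 𝔥ᗮ) (V₁ : G) :
    RicBilin br 𝔥 𝔨 0 pn pninv V₁ V₂ =
      RicBilin br 𝔥 𝔨 0 pn pninv V₁ (𝔨ᗮ.starProjection V₂) := by
  simp only [RicBilin, Rmfun_zero_eq_starProjection hLie hpair hV₂]

theorem RicBilin_zero_eq_add (hpair : IsToralPair br 𝔥 𝔨) (V₁ V₂ : G) :
    RicBilin br 𝔥 𝔨 0 pn pninv V₁ V₂ =
      ∑ j, ⟪(stdOrthonormalBasis ℝ ↥(𝔨 ⊓ 𝔥ᗮ) j : G),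
        Rmfun br 𝔥 𝔨 0 pn pninv V₁ (stdOrthonormalBasis ℝ ↥(𝔨 ⊓ 𝔥ᗮ) j) V₂⟫ +
      ∑ k, ⟪(stdOrthonormalBasis ℝ 𝔨ᗮ k : G),
        Rmfun br 𝔥 𝔨 0 pn pninv V₁ (stdOrthonormalBasis ℝ 𝔨ᗮ k) V₂⟫ := by
  let A : G →ₗ[ℝ] G :=
    { toFun := fun Z => Rmfun br 𝔥 𝔨 0 pn pninv V₁ Z V₂
      map_add' := fun Z Z' => by
        simp only [Rmfun, Sfun_zero_eq_collapsedS hpair, pr_eq_starProjection, map_add,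
          LinearMap.add_apply]
        abel
      map_smul' := fun c Z => by
        simp only [Rmfun, Sfun_zero_eq_collapsedS hpair, pr_eq_starProjection, map_smul,
          LinearMap.smul_apply, RingHom.id_apply]
        module }
  exact Submodule.sum_inner_orthonormalBasis_of_starProjection_eq_add
    hpair.starProjection_orthogonal_h _ _ _ A

theorem RicBilin_zero_t_n_eq_zero (hLie : IsLieQ br) (hpair : IsToralPair br 𝔥 𝔨)
    (hcomm : CommAd br 𝔨 pn) (hinv : InvOn' 𝔨ᗮ pn pninv) {T Y : G}
    (hT : T ∈ 𝔨 ⊓ 𝔥ᗮ) (hY : Y ∈ 𝔨ᗮ) :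
    RicBilin br 𝔥 𝔨 0 pn pninv T Y = 0 := by
  rw [RicBilin_zero_eq_add hpair, Finset.sum_eq_zero fun j _ => ?_,
    Finset.sum_eq_zero fun k _ => ?_, add_zero]
  · rw [Rmfun_zero_t_n_n hLie hpair hcomm hinv hT (Submodule.coe_mem _) hY]
    exact Submodule.inner_left_of_mem_orthogonal
      (𝔨.smul_mem _ ((𝔨 ⊓ 𝔥ᗮ).starProjection_apply_mem _).1) (Submodule.coe_mem _)
  · rw [Rmfun_zero_t_t_n_eq_zero hLie hpair hT (Submodule.coe_mem _) hY, inner_zero_right]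

theorem RicBilin_zero_n_n (hLie : IsLieQ br) (hpair : IsToralPair br 𝔥 𝔨)
    (hpn : SymOn 𝔨ᗮ pn) (hcomm : CommAd br 𝔨 pn) (hinv : InvOn' 𝔨ᗮ pn pninv)
    {SN : G → G → G} (hSN : IsSN br 𝔨 pn pninv SN) {X Y : G} (hX : X ∈ 𝔨ᗮ) (hY : Y ∈ 𝔨ᗮ) :
    RicBilin br 𝔥 𝔨 0 pn pninv X Y =
      ∑ k, ⟪(stdOrthonormalBasis ℝ 𝔨ᗮ k : G),
        RmNfun br 𝔨 SN X (stdOrthonormalBasis ℝ 𝔨ᗮ k) Y⟫ := by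
  rw [RicBilin_zero_eq_add hpair,
    Finset.sum_eq_zero fun j _ =>
      inner_Rmfun_zero_n_t_n hLie hpair hcomm hinv hX (Submodule.coe_mem _) hY, zero_add]
  refine Finset.sum_congr rfl fun k _ => ?_
  rw [← sub_eq_zero, ← inner_sub_right]
  exact Submodule.inner_left_of_mem_orthogonal
    (Rmfun_zero_sub_RmNfun_mem hLie hpair hpn hinv hSN hX (Submodule.coe_mem _) hY).1
    (Submodule.coe_mem _)

end Ricci

theorem extRic_collapsed_splits
    (hLie : IsLieQ br) (𝔥 𝔨 : Submodule ℝ G) (hpair : IsToralPair br 𝔥 𝔨)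
    (pn pninv : G →L[ℝ] G)
    (hpn : SymOn 𝔨ᗮ pn) (hpncomm : CommAd br 𝔨 pn)
    (hpninv : InvOn' 𝔨ᗮ pn pninv)
    (SN : G → G → G) (hSN : IsSN br 𝔨 pn pninv SN)
    (RicN : G →L[ℝ] G) (hRicN : IsBaseRic br 𝔨 SN RicN)
    (Ric : G →L[ℝ] G) (hRic : IsExtRic br 𝔥 𝔨 0 pn pninv Ric) :
    (∀ T ∈ 𝔨 ⊓ 𝔥ᗮ, Ric T = 0) ∧ (∀ X ∈ 𝔨ᗮ, Ric X = RicN X) := by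
  have hRic_mem : ∀ v, Ric v ∈ 𝔥ᗮ := mem_of_eq_projL_comp hRic.1
  have hRicN_mem : ∀ v, RicN v ∈ 𝔨ᗮ := mem_of_eq_projL_comp hRicN.1
  have hRic_inner : ∀ V ∈ 𝔥ᗮ, ∀ W ∈ 𝔥ᗮ,
      ⟪Ric V, W⟫ = RicBilin br 𝔥 𝔨 0 pn pninv V (𝔨ᗮ.starProjection W) := fun V hV W hW => by
    rw [hRic.2 V hV W hW, RicBilin_zero_eq_starProjection hLie hpair hW]
  refine ⟨fun T hT => ?_, fun X hX => ?_⟩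
  · rw [← inner_self_eq_zero (𝕜 := ℝ), hRic_inner T hT.2 _ (hRic_mem T),
      RicBilin_zero_t_n_eq_zero hLie hpair hpncomm hpninv hT (𝔨ᗮ.starProjection_apply_mem _)]
  · have hD : Ric X - RicN X ∈ 𝔥ᗮ :=
      sub_mem (hRic_mem X) (hpair.orthogonal_le_orthogonal (hRicN_mem X))
    rw [← sub_eq_zero, ← inner_self_eq_zero (𝕜 := ℝ), inner_sub_left,
      hRic_inner X (hpair.orthogonal_le_orthogonal hX) _ hD,
      ← Submodule.inner_starProjection_of_mem_left (hRicN_mem X),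
      RicBilin_zero_n_n hLie hpair hpn hpncomm hpninv hSN hX (𝔨ᗮ.starProjection_apply_mem _),
      hRicN.2 X hX _ (𝔨ᗮ.starProjection_apply_mem _), sub_self]
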